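/- arXiv:1303.3654 — 2 statements merged into one kernel-verified Lean document; each statement's English description precedes it below -/
import Mathlib

section
/- Let X be a real Banach space, let f, g ∈ Γ(X), and let x̄ ∈ X and ȳ*, w̄* ∈ X* be such that ȳ* ∈ ∂f(x̄) and w̄* ∈ ∂g(x̄). If ∂f is strongly metrically subregular at x̄ for ȳ* and ∂g is strongly metrically subregular at x̄ for w̄*, then ∂(f + g) is strongly metrically subregular at x̄ for ȳ* + w̄*. -/
/-
For `f ∈ Γ(X)` on a Banach space, strong subregularity of `∂f` at `x̄` for `ȳ` is equivalent to
quadratic growth `f x ≥ f x̄ + ȳ (x - x̄) + c ‖x - x̄‖²` near `x̄`, and such growth is additive.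

Growth gives subregularity by pairing the subgradient inequality at `x` with the growth inequality
at `x`. Conversely, if `f x ≤ f x̄ + ȳ (x - x̄) + m` with `‖x - x̄‖ = ρ`, then `ȳ` is an
`m`-subgradient of `f` at `x`, and the Brøndsted–Rockafellar theorem (Ekeland's principle followed
by Hahn–Banach separation of the epigraph from a cone) yields `u` with `‖u - x‖ ≤ ρ/2` and
`p ∈ ∂f(u)` with `‖p - ȳ‖ ≤ 2m/ρ`; subregularity at `u` then forces `ρ² ≤ 4κm`.
-/

open Topology Filter Metric Set

/-- The convex subdifferential of an extended-real-valued function `f` at `x`. -/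
noncomputable def subdiff {X : Type*} [NormedAddCommGroup X] [NormedSpace ℝ X]
    (f : X → EReal) (x : X) : Set (X →L[ℝ] ℝ) :=
  {p | f x ≠ ⊤ ∧ ∀ z : X, f x + ((p (z - x) : ℝ) : EReal) ≤ f z}

/-- A set-valued map `F : X ⇉ X*` is strongly metrically subregular at `x̄` for `ȳ*`:
`ȳ* ∈ F(x̄)` and for some `κ > 0` and some neighborhood `U` of `x̄`,
`‖x - x̄‖ ≤ κ·d(ȳ*, F(x))` for all `x ∈ U` (stated pointwise over `y ∈ F(x)`,
matching the convention `d(ȳ*, ∅) = ∞`). -/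
def StrongSubreg {X : Type*} [NormedAddCommGroup X] [NormedSpace ℝ X]
    (F : X → Set (X →L[ℝ] ℝ)) (xbar : X) (ybar : X →L[ℝ] ℝ) : Prop :=
  ybar ∈ F xbar ∧ ∃ κ > (0 : ℝ), ∃ U ∈ 𝓝 xbar, ∀ x ∈ U, ∀ y ∈ F x,
    ‖x - xbar‖ ≤ κ * ‖y - ybar‖

lemma EReal.add_coe_add_coe (a : EReal) (r s : ℝ) : a + r + s = a + ((r + s : ℝ) : EReal) := by
  rw [add_assoc, EReal.coe_add]

section Ekeland

variable {X : Type*} [MetricSpace X] {φ : X → ℝ} {α : ℝ}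

def ekelandSet (φ : X → ℝ) (α : ℝ) (x : X) : Set X :=
  {z | φ z + α * dist z x ≤ φ x}

lemma mem_ekelandSet {x z : X} : z ∈ ekelandSet φ α x ↔ φ z + α * dist z x ≤ φ x := Iff.rfl

lemma mem_ekelandSet_self (x : X) : x ∈ ekelandSet φ α x := by
  simp [mem_ekelandSet]

lemma ekelandSet_trans (hα : 0 ≤ α) {x y z : X} (hzy : z ∈ ekelandSet φ α y)
    (hyx : y ∈ ekelandSet φ α x) : z ∈ ekelandSet φ α x := by
  simp only [mem_ekelandSet] at *
  nlinarith [dist_triangle z y x]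

lemma LowerSemicontinuous.isClosed_ekelandSet (hφ : LowerSemicontinuous φ) (x : X) :
    IsClosed (ekelandSet φ α x) :=
  (hφ.add ((continuous_id.dist continuous_const).const_mul α).lowerSemicontinuous).isClosed_preimage
    (φ x)

lemma exists_mem_ekelandSet_le_add (hb : BddBelow (range φ)) {ε : ℝ} (hε : 0 < ε) (x : X) :
    ∃ x' ∈ ekelandSet φ α x, ∀ w ∈ ekelandSet φ α x, φ x' ≤ φ w + ε := by
  have hne : (φ '' ekelandSet φ α x).Nonempty := ⟨_, x, mem_ekelandSet_self x, rfl⟩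
  obtain ⟨_, ⟨x', hx', rfl⟩, hlt⟩ := exists_lt_of_csInf_lt hne (lt_add_of_pos_right _ hε)
  exact ⟨x', hx', fun w hw =>
    by linarith [csInf_le (hb.mono (image_subset_range _ _)) (mem_image_of_mem φ hw)]⟩

theorem ekeland_variational_principle [CompleteSpace X] (hφ : LowerSemicontinuous φ)
    (hb : BddBelow (range φ)) (hα : 0 < α) (x₀ : X) :
    ∃ u, φ u + α * dist u x₀ ≤ φ x₀ ∧ ∀ z, φ u ≤ φ z + α * dist z u := by
  set S := ekelandSet φ α
  choose next hnext_mem hnext_le using fun (n : ℕ) =>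
    exists_mem_ekelandSet_le_add (α := α) hb (Nat.one_div_pos_of_nat (n := n))
  let seq : ℕ → X := fun n => Nat.rec x₀ next n
  have hstep : ∀ n, seq (n + 1) ∈ S (seq n) := fun n => hnext_mem n _
  have hstep_le : ∀ n, ∀ w ∈ S (seq n), φ (seq (n + 1)) ≤ φ w + 1 / (n + 1) :=
    fun n => hnext_le n (seq n)
  have hchain : ∀ n m, n ≤ m → seq m ∈ S (seq n) := by
    intro n m hnm
    induction hnm with
    | refl => exact mem_ekelandSet_self _
    | step _ ih => exact ekelandSet_trans hα.le (hstep _) ih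
  have hdist : ∀ n, ∀ w ∈ S (seq (n + 1)), α * dist w (seq (n + 1)) ≤ 1 / (n + 1) := by
    intro n w hw
    have := hstep_le n w (ekelandSet_trans hα.le hw (hstep n))
    simp only [S, mem_ekelandSet] at hw
    linarith
  have hcauchy : CauchySeq fun n => seq (n + 1) := by
    refine cauchySeq_of_le_tendsto_0' (fun n : ℕ => 1 / (n + 1) / α) (fun n m hnm => ?_) ?_
    · rw [dist_comm, le_div_iff₀ hα, mul_comm]
      exact hdist n _ (hchain (n + 1) (m + 1) (by omega))
    · simpa using (tendsto_one_div_add_atTop_nhds_zero_nat (𝕜 := ℝ)).div_const α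
  obtain ⟨u, hu⟩ := cauchySeq_tendsto_of_complete hcauchy
  have hu_mem : ∀ n, u ∈ S (seq n) := fun n =>
    (hφ.isClosed_ekelandSet _).mem_of_tendsto hu
      (eventually_atTop.2 ⟨n, fun m hm => hchain n (m + 1) (by omega)⟩)
  refine ⟨u, hu_mem 0, fun z => ?_⟩
  by_cases hz : z ∈ S u
  · have hle : ∀ n : ℕ, φ u ≤ φ z + 1 / (n + 1) := fun n => by
      have h1 := hstep_le n z (ekelandSet_trans hα.le hz (hu_mem n))
      have h2 := hu_mem (n + 1)
      simp only [S, mem_ekelandSet] at h2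
      nlinarith [dist_nonneg (x := u) (y := seq (n + 1))]
    have : φ u ≤ φ z := ge_of_tendsto'
      (by simpa using (tendsto_one_div_add_atTop_nhds_zero_nat (𝕜 := ℝ)).const_add (φ z)) hle
    nlinarith [dist_nonneg (x := z) (y := u)]
  · simp only [S, mem_ekelandSet, not_le] at hz
    linarith

lemma LowerSemicontinuous.toReal_min {h : X → EReal} (hh : LowerSemicontinuous h)
    (hbot : ∀ z, h z ≠ ⊥) (C : ℝ) : LowerSemicontinuous fun z => (min (h z) C).toReal := by
  have hcoe : ∀ z, ((min (h z) C).toReal : EReal) = min (h z) C := fun z =>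
    EReal.coe_toReal (ne_top_of_le_ne_top (EReal.coe_ne_top _) (min_le_right _ _))
      (lt_min (hbot z).bot_lt (EReal.coe_ne_bot _).bot_lt).ne'
  have hmin : LowerSemicontinuous fun z => min (h z) C := hh.inf lowerSemicontinuous_const
  intro z y (hy : y < (min (h z) C).toReal)
  have hyz : (y : EReal) < min (h z) C := by rw [← hcoe]; exact_mod_cast hy
  filter_upwards [hmin z y hyz] with w (hw : (y : EReal) < _)
  rw [← hcoe] at hw
  exact_mod_cast hw

theorem ekeland_variational_principle_ereal [CompleteSpace X] {h : X → EReal}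
    (hh : LowerSemicontinuous h) {b : ℝ} (hb : ∀ z, (b : EReal) ≤ h z) (hα : 0 < α) {x₀ : X}
    (hx₀ : h x₀ ≠ ⊤) :
    ∃ u, h u + ((α * dist u x₀ : ℝ) : EReal) ≤ h x₀ ∧
      ∀ z, h u ≤ h z + ((α * dist z u : ℝ) : EReal) := by
  have hbot : ∀ z, h z ≠ ⊥ := fun z => ne_bot_of_le_ne_bot (EReal.coe_ne_bot b) (hb z)
  lift h x₀ to ℝ using ⟨hx₀, hbot x₀⟩ with c hc
  set C : EReal := ((c + 1 : ℝ) : EReal)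
  -- truncating at `c + 1` makes `h` real-valued without changing it at the Ekeland point
  set φ : X → ℝ := fun z => (min (h z) C).toReal
  have hφ : ∀ z, (φ z : EReal) = min (h z) C := fun z =>
    EReal.coe_toReal (ne_top_of_le_ne_top (EReal.coe_ne_top _) (min_le_right _ _))
      (lt_min (hbot z).bot_lt (EReal.coe_ne_bot _).bot_lt).ne'
  have hφ_lsc : LowerSemicontinuous φ := hh.toReal_min hbot (c + 1)
  have hφ_bdd : BddBelow (range φ) := ⟨min b (c + 1), by
    rintro _ ⟨z, rfl⟩
    have : ((min b (c + 1) : ℝ) : EReal) ≤ φ z := by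
      rw [hφ]
      exact le_min ((EReal.coe_le_coe_iff.2 (min_le_left _ _)).trans (hb z))
        (EReal.coe_le_coe_iff.2 (min_le_right _ _))
    exact_mod_cast this⟩
  have hφ₀ : φ x₀ = c := by
    have : (φ x₀ : EReal) = c := by
      rw [hφ, ← hc]; exact min_eq_left (EReal.coe_le_coe_iff.2 (by linarith))
    exact_mod_cast this
  obtain ⟨u, hu₀, hu⟩ := ekeland_variational_principle hφ_lsc hφ_bdd hα x₀
  have hφu : (φ u : EReal) = h u := by
    rw [hφ]
    refine min_eq_left (le_of_lt ?_)
    by_contra! hle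
    have : c + 1 ≤ φ u := by
      have : C ≤ (φ u : EReal) := by rw [hφ]; exact le_min hle le_rfl
      exact EReal.coe_le_coe_iff.1 this
    nlinarith [dist_nonneg (x := u) (y := x₀)]
  refine ⟨u, ?_, fun z => ?_⟩
  · rw [← hφu, ← EReal.coe_add]
    exact_mod_cast hφ₀ ▸ hu₀
  · calc h u = φ u := hφu.symm
      _ ≤ ((φ z + α * dist z u : ℝ) : EReal) := by exact_mod_cast hu z
      _ ≤ h z + ((α * dist z u : ℝ) : EReal) := by
        rw [EReal.coe_add, hφ]
        exact add_le_add_left (min_le_left _ _) _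

end Ekeland

section Subgradient

variable {X : Type*} [NormedAddCommGroup X] [NormedSpace ℝ X]

lemma convex_epigraph_of_ereal {f : X → EReal}
    (hconv : ∀ x y : X, ∀ a b : ℝ, 0 ≤ a → 0 ≤ b → a + b = 1 →
      f (a • x + b • y) ≤ (a : EReal) * f x + (b : EReal) * f y) :
    Convex ℝ {q : X × ℝ | f q.1 ≤ q.2} := by
  intro q₁ (hq₁ : f q₁.1 ≤ q₁.2) q₂ (hq₂ : f q₂.1 ≤ q₂.2) a b ha hb hab
  calc f (a • q₁.1 + b • q₂.1) ≤ (a : EReal) * f q₁.1 + (b : EReal) * f q₂.1 :=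
        hconv _ _ a b ha hb hab
    _ ≤ (a : EReal) * q₁.2 + (b : EReal) * q₂.2 :=
        add_le_add (mul_le_mul_of_nonneg_left hq₁ (EReal.coe_nonneg.2 ha))
          (mul_le_mul_of_nonneg_left hq₂ (EReal.coe_nonneg.2 hb))
    _ = ((a • q₁ + b • q₂).2 : ℝ) := by simp

lemma convex_setOf_lt_add_sub_norm (c α : ℝ) (hα : 0 ≤ α) (y : X →L[ℝ] ℝ) (u : X) :
    Convex ℝ {q : X × ℝ | q.2 < c + y (q.1 - u) - α * ‖q.1 - u‖} := by
  refine convex_iff_forall_pos.2 fun q₁ (hq₁ : q₁.2 < _) q₂ (hq₂ : q₂.2 < _) a b ha hb hab => ?_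
  have hsplit : (a • q₁ + b • q₂).1 - u = a • (q₁.1 - u) + b • (q₂.1 - u) := by
    simp only [Prod.fst_add, Prod.smul_fst]
    linear_combination (norm := module) hab • u
  have hnorm : ‖a • (q₁.1 - u) + b • (q₂.1 - u)‖ ≤ a * ‖q₁.1 - u‖ + b * ‖q₂.1 - u‖ := by
    refine (norm_add_le _ _).trans ?_
    rw [norm_smul_of_nonneg ha.le, norm_smul_of_nonneg hb.le]
  show a * q₁.2 + b * q₂.2 < _
  rw [hsplit, map_add, map_smul, map_smul, smul_eq_mul, smul_eq_mul]
  have hc : a * c + b * c = c := by rw [← add_mul, hab, one_mul]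
  nlinarith [mul_le_mul_of_nonneg_left hnorm hα, mul_lt_mul_of_pos_left hq₁ ha,
    mul_lt_mul_of_pos_left hq₂ hb]

lemma disjoint_setOf_lt_add_sub_norm_epigraph {f : X → EReal} {u : X} {c α : ℝ}
    {y : X →L[ℝ] ℝ}
    (hmin : ∀ z, (c : EReal) + ((y (z - u) : ℝ) : EReal) ≤ f z + ((α * ‖z - u‖ : ℝ) : EReal)) :
    Disjoint {q : X × ℝ | q.2 < c + y (q.1 - u) - α * ‖q.1 - u‖} {q : X × ℝ | f q.1 ≤ q.2} := by
  refine Set.disjoint_left.2 fun q (hqA : q.2 < _) (hqB : f q.1 ≤ q.2) => ?_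
  have : ((c + y (q.1 - u) : ℝ) : EReal) ≤ ((q.2 + α * ‖q.1 - u‖ : ℝ) : EReal) := by
    rw [EReal.coe_add, EReal.coe_add]
    exact (hmin q.1).trans (add_le_add_left hqB _)
  linarith [EReal.coe_le_coe_iff.1 this]

theorem exists_affine_minorant_of_le_add_norm {f : X → EReal}
    (hconv : ∀ x y : X, ∀ a b : ℝ, 0 ≤ a → 0 ≤ b → a + b = 1 →
      f (a • x + b • y) ≤ (a : EReal) * f x + (b : EReal) * f y)
    {u : X} {c : ℝ} (hu : f u = c) {y : X →L[ℝ] ℝ} {α : ℝ} (hα : 0 ≤ α)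
    (hmin : ∀ z, (c : EReal) + ((y (z - u) : ℝ) : EReal) ≤ f z + ((α * ‖z - u‖ : ℝ) : EReal)) :
    ∃ p : X →L[ℝ] ℝ, (∀ z (t : ℝ), f z ≤ t → c + p (z - u) ≤ t) ∧ ∀ w, y w - p w ≤ α * ‖w‖ := by
  -- separate the epigraph of `f` from the open cone below `c + y (· - u) - α ‖· - u‖`
  obtain ⟨φ, s, hφA, hφB⟩ := geometric_hahn_banach_open (convex_setOf_lt_add_sub_norm c α hα y u)
    (isOpen_lt continuous_snd (by fun_prop)) (convex_epigraph_of_ereal hconv)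
    (disjoint_setOf_lt_add_sub_norm_epigraph hmin)
  set ℓ : X →L[ℝ] ℝ := φ.comp (ContinuousLinearMap.inl ℝ X ℝ)
  set β : ℝ := φ (0, 1)
  have hφ : ∀ z t, φ (z, t) = ℓ z + t * β := fun z t => by
    rw [show ((z, t) : X × ℝ) = (z, 0) + t • (0, 1) by simp, map_add, map_smul, smul_eq_mul]
    rfl
  have hB : ∀ z (t : ℝ), f z ≤ t → s ≤ ℓ z + t * β := fun z t h => hφ z t ▸ hφB (z, t) h
  have hA : ∀ z (t : ℝ), t < c + y (z - u) - α * ‖z - u‖ → ℓ z + t * β < s :=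
    fun z t h => hφ z t ▸ hφA (z, t) h
  have hβ : 0 < β := by
    have h1 := hA u (c - 1) (by simp)
    have h2 := hB u c hu.le
    nlinarith
  have hA_le : ∀ z, ℓ z + (c + y (z - u) - α * ‖z - u‖) * β ≤ s := fun z => by
    have : c + y (z - u) - α * ‖z - u‖ ≤ (s - ℓ z) / β :=
      le_of_forall_lt fun t ht => by rw [lt_div_iff₀ hβ]; linarith [hA z t ht]
    rw [le_div_iff₀ hβ] at this
    linarith
  have hs : s = ℓ u + c * β := le_antisymm (hB u c hu.le) (by simpa using hA_le u)
  refine ⟨-β⁻¹ • ℓ, fun z t ht => ?_, fun w => ?_⟩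
  · have key : c * β - (ℓ z - ℓ u) ≤ t * β := by linarith [hB z t ht]
    rw [smul_apply, map_sub, smul_eq_mul]
    calc c + -β⁻¹ * (ℓ z - ℓ u) = (c * β - (ℓ z - ℓ u)) / β := by field_simp; ring
      _ ≤ t := by rwa [div_le_iff₀ hβ]
  · have := hA_le (u + w)
    simp only [add_sub_cancel_left, map_add] at this
    have key : ℓ w + β * y w ≤ β * (α * ‖w‖) := by linarith
    calc y w - (-β⁻¹ • ℓ) w = β⁻¹ * (ℓ w + β * y w) := by
          rw [smul_apply, smul_eq_mul]; field_simp; ring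
      _ ≤ β⁻¹ * (β * (α * ‖w‖)) := by gcongr
      _ = α * ‖w‖ := by field_simp

theorem exists_mem_subdiff_norm_sub_le {f : X → EReal}
    (hconv : ∀ x y : X, ∀ a b : ℝ, 0 ≤ a → 0 ≤ b → a + b = 1 →
      f (a • x + b • y) ≤ (a : EReal) * f x + (b : EReal) * f y)
    {u : X} (hu : f u ≠ ⊤) (hu' : f u ≠ ⊥) {y : X →L[ℝ] ℝ} {α : ℝ} (hα : 0 ≤ α)
    (hmin : ∀ z, f u + ((y (z - u) : ℝ) : EReal) ≤ f z + ((α * ‖z - u‖ : ℝ) : EReal)) :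
    ∃ p ∈ subdiff f u, ‖p - y‖ ≤ α := by
  obtain ⟨c, hc⟩ : ∃ c : ℝ, (c : EReal) = f u := ⟨_, EReal.coe_toReal hu hu'⟩
  rw [← hc] at hmin
  obtain ⟨p, hp_le, hp_near⟩ := exists_affine_minorant_of_le_add_norm hconv hc.symm hα hmin
  refine ⟨p, ⟨hu, fun z => ?_⟩, ContinuousLinearMap.opNorm_le_bound _ hα fun w => ?_⟩
  · rw [← hc, ← EReal.coe_add, ← EReal.le_of_forall_lt_iff_le]
    exact fun t ht => EReal.coe_le_coe_iff.2 (hp_le z t ht.le)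
  · have h₁ := hp_near w
    have h₂ := hp_near (-w)
    rw [map_neg, map_neg, norm_neg] at h₂
    rw [sub_apply, Real.norm_eq_abs, abs_le]
    constructor <;> linarith

theorem brondsted_rockafellar [CompleteSpace X] {f : X → EReal} (hbot : ∀ z, f z ≠ ⊥)
    (hlsc : LowerSemicontinuous f)
    (hconv : ∀ x y : X, ∀ a b : ℝ, 0 ≤ a → 0 ≤ b → a + b = 1 →
      f (a • x + b • y) ≤ (a : EReal) * f x + (b : EReal) * f y)
    {x : X} (hx : f x ≠ ⊤) {y : X →L[ℝ] ℝ} {ε α : ℝ} (hα : 0 < α)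
    (hy : ∀ z, f x + ((y (z - x) : ℝ) : EReal) ≤ f z + (ε : EReal)) :
    ∃ u, ‖u - x‖ ≤ ε / α ∧ ∃ p ∈ subdiff f u, ‖p - y‖ ≤ α := by
  obtain ⟨c, hc⟩ : ∃ c : ℝ, (c : EReal) = f x := ⟨_, EReal.coe_toReal hx (hbot x)⟩
  -- tilting by `y` turns the `ε`-subgradient inequality into the lower bound `c - ε`
  set h : X → EReal := fun z => f z + ((y (x - z) : ℝ) : EReal)
  have htilt : ∀ z, y (z - x) + y (x - z) = 0 := fun z => by
    rw [← map_add, sub_add_sub_cancel, sub_self, map_zero]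
  have h_ge : ∀ z, ((c - ε : ℝ) : EReal) ≤ h z := fun z => by
    have := add_le_add_left (hy z) ((y (x - z) - ε : ℝ) : EReal)
    rw [← hc, EReal.add_coe_add_coe, EReal.add_coe_add_coe, ← EReal.coe_add] at this
    convert this using 3 <;> linarith [htilt z]
  have h_lsc : LowerSemicontinuous h :=
    hlsc.add' (continuous_coe_real_ereal.comp (y.continuous.comp
      (continuous_const.sub continuous_id))).lowerSemicontinuous
      fun z => EReal.continuousAt_add (Or.inr (EReal.coe_ne_bot _)) (Or.inr (EReal.coe_ne_top _))
  have hx_eq : h x = c := by simp only [h, sub_self, map_zero, EReal.coe_zero, add_zero, hc]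
  obtain ⟨u, hu₀, hu⟩ := ekeland_variational_principle_ereal h_lsc h_ge hα
    (hx_eq ▸ EReal.coe_ne_top c)
  have hux : ‖u - x‖ ≤ ε / α := by
    have : ((c - ε + α * dist u x : ℝ) : EReal) ≤ c := by
      rw [EReal.coe_add, ← hx_eq]; exact (add_le_add_left (h_ge u) _).trans hu₀
    rw [EReal.coe_le_coe_iff, dist_eq_norm] at this
    rw [le_div_iff₀ hα]
    linarith
  have hu_top : h u ≠ ⊤ := ne_top_of_le_ne_top (hx_eq ▸ EReal.coe_ne_top c)
    ((le_add_of_nonneg_right (EReal.coe_nonneg.2 (by positivity))).trans hu₀)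
  have hfu : f u ≠ ⊤ := fun hfu => hu_top (by simp only [h, hfu, EReal.top_add_coe])
  have hmin : ∀ z, f u + ((y (z - u) : ℝ) : EReal) ≤ f z + ((α * ‖z - u‖ : ℝ) : EReal) :=
    fun z => by
      have := add_le_add_left (hu z) ((y (z - x) : ℝ) : EReal)
      simp only [h, EReal.add_coe_add_coe] at this
      convert this using 3
      · rw [← map_add, sub_add_sub_cancel']
      · rw [dist_eq_norm]; linarith [htilt z]
  exact ⟨u, hux, exists_mem_subdiff_norm_sub_le hconv hfu (hbot u) hα.le hmin⟩

end Subgradient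

section QuadraticGrowth

variable {X : Type*} [NormedAddCommGroup X] [NormedSpace ℝ X]

def HasQuadraticGrowthAt (f : X → EReal) (xbar : X) (ybar : X →L[ℝ] ℝ) (c : ℝ) : Prop :=
  ∀ᶠ x in 𝓝 xbar, f xbar + ((ybar (x - xbar) + c * ‖x - xbar‖ ^ 2 : ℝ) : EReal) ≤ f x

lemma add_mem_subdiff_add {f g : X → EReal} {x : X} {y w : X →L[ℝ] ℝ} (hy : y ∈ subdiff f x)
    (hw : w ∈ subdiff g x) : y + w ∈ subdiff (fun z => f z + g z) x := by
  refine ⟨EReal.add_ne_top hy.1 hw.1, fun z => ?_⟩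
  calc f x + g x + (((y + w) (z - x) : ℝ) : EReal)
      = (f x + ((y (z - x) : ℝ) : EReal)) + (g x + ((w (z - x) : ℝ) : EReal)) := by
        rw [add_apply, EReal.coe_add, add_add_add_comm]
    _ ≤ f z + g z := add_le_add (hy.2 z) (hw.2 z)

lemma HasQuadraticGrowthAt.add {f g : X → EReal} {xbar : X} {ybar wbar : X →L[ℝ] ℝ}
    {c₁ c₂ : ℝ} (hf : HasQuadraticGrowthAt f xbar ybar c₁)
    (hg : HasQuadraticGrowthAt g xbar wbar c₂) :
    HasQuadraticGrowthAt (fun z => f z + g z) xbar (ybar + wbar) (c₁ + c₂) := by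
  filter_upwards [hf, hg] with x hfx hgx
  calc f xbar + g xbar + ((((ybar + wbar) (x - xbar) + (c₁ + c₂) * ‖x - xbar‖ ^ 2) : ℝ) : EReal)
      = (f xbar + ((ybar (x - xbar) + c₁ * ‖x - xbar‖ ^ 2 : ℝ) : EReal)) +
          (g xbar + ((wbar (x - xbar) + c₂ * ‖x - xbar‖ ^ 2 : ℝ) : EReal)) := by
        rw [add_add_add_comm, ← EReal.coe_add, add_apply]
        ring_nf
    _ ≤ f x + g x := add_le_add hfx hgx

theorem HasQuadraticGrowthAt.strongSubreg {f : X → EReal} {xbar : X} {ybar : X →L[ℝ] ℝ} {c : ℝ}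
    (hbot : f xbar ≠ ⊥) (hybar : ybar ∈ subdiff f xbar) (hc : 0 < c)
    (hf : HasQuadraticGrowthAt f xbar ybar c) : StrongSubreg (subdiff f) xbar ybar := by
  refine ⟨hybar, c⁻¹, inv_pos.2 hc, _, hf, fun x (hx : _ ≤ f x) y hy => ?_⟩
  have hgap := hy.2 xbar
  lift f xbar to ℝ using ⟨hybar.1, hbot⟩ with b
  lift f x to ℝ using ⟨hy.1, ne_bot_of_le_ne_bot (EReal.coe_ne_bot _) hx⟩ with a
  rw [← EReal.coe_add] at hx hgap
  rw [EReal.coe_le_coe_iff] at hx hgap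
  have hpair : c * ‖x - xbar‖ ^ 2 ≤ ‖y - ybar‖ * ‖x - xbar‖ := by
    have := (le_abs_self _).trans ((y - ybar).le_opNorm (x - xbar))
    rw [sub_apply] at this
    have hneg : y (xbar - x) = - y (x - xbar) := by rw [← map_neg, neg_sub]
    linarith
  rcases (norm_nonneg (x - xbar)).eq_or_lt with h0 | hpos
  · rw [← h0]; positivity
  rw [inv_mul_eq_div, le_div_iff₀ hc]
  nlinarith

theorem sq_norm_sub_le_of_le_add [CompleteSpace X] {f : X → EReal} (hbot : ∀ z, f z ≠ ⊥)
    (hlsc : LowerSemicontinuous f)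
    (hconv : ∀ x y : X, ∀ a b : ℝ, 0 ≤ a → 0 ≤ b → a + b = 1 →
      f (a • x + b • y) ≤ (a : EReal) * f x + (b : EReal) * f y)
    {xbar : X} {ybar : X →L[ℝ] ℝ} (hybar : ybar ∈ subdiff f xbar) {κ r : ℝ} (hκ : 0 ≤ κ)
    (hsub : ∀ x ∈ ball xbar r, ∀ y ∈ subdiff f x, ‖x - xbar‖ ≤ κ * ‖y - ybar‖)
    {x : X} (hx : ‖x - xbar‖ < r / 2) {m : ℝ} (hm : 0 < m)
    (hfx : f x ≤ f xbar + ((ybar (x - xbar) + m : ℝ) : EReal)) :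
    ‖x - xbar‖ ^ 2 ≤ 4 * κ * m := by
  rcases (norm_nonneg (x - xbar)).eq_or_lt with hρ | hρ
  · rw [← hρ, sq, zero_mul]; positivity
  set ρ := ‖x - xbar‖
  have hfx_top : f x ≠ ⊤ := ne_top_of_le_ne_top
    (EReal.add_ne_top hybar.1 (EReal.coe_ne_top _)) hfx
  have happrox : ∀ z, f x + ((ybar (z - x) : ℝ) : EReal) ≤ f z + (m : EReal) := fun z => calc
    f x + ((ybar (z - x) : ℝ) : EReal)
        ≤ f xbar + ((ybar (x - xbar) + m : ℝ) : EReal) + ((ybar (z - x) : ℝ) : EReal) :=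
      add_le_add_left hfx _
    _ = f xbar + ((ybar (z - xbar) : ℝ) : EReal) + (m : EReal) := by
      rw [EReal.add_coe_add_coe, EReal.add_coe_add_coe, map_sub, map_sub, map_sub]
      ring_nf
    _ ≤ f z + (m : EReal) := add_le_add_left (hybar.2 z) _
  obtain ⟨u, hux, p, hp, hpy⟩ :=
    brondsted_rockafellar hbot hlsc hconv hfx_top (by positivity : 0 < 2 * m / ρ) happrox
  rw [div_div_eq_mul_div, mul_comm m ρ, mul_div_mul_right _ _ hm.ne'] at hux
  have hu_far : ρ / 2 ≤ ‖u - xbar‖ := by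
    linarith [norm_sub_le_norm_sub_add_norm_sub x u xbar, norm_sub_rev x u]
  have hu_ball : u ∈ ball xbar r := by
    rw [mem_ball_iff_norm]
    linarith [norm_sub_le_norm_sub_add_norm_sub u x xbar]
  have : ρ / 2 ≤ κ * (2 * m) / ρ := calc
    ρ / 2 ≤ κ * ‖p - ybar‖ := hu_far.trans (hsub u hu_ball p hp)
    _ ≤ κ * (2 * m / ρ) := mul_le_mul_of_nonneg_left hpy hκ
    _ = κ * (2 * m) / ρ := mul_div_assoc' _ _ _
  rw [le_div_iff₀ hρ] at this
  nlinarith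

theorem StrongSubreg.exists_hasQuadraticGrowthAt [CompleteSpace X] {f : X → EReal}
    (hbot : ∀ z, f z ≠ ⊥) (hlsc : LowerSemicontinuous f)
    (hconv : ∀ x y : X, ∀ a b : ℝ, 0 ≤ a → 0 ≤ b → a + b = 1 →
      f (a • x + b • y) ≤ (a : EReal) * f x + (b : EReal) * f y)
    {xbar : X} {ybar : X →L[ℝ] ℝ} (hf : StrongSubreg (subdiff f) xbar ybar) :
    ∃ c > 0, HasQuadraticGrowthAt f xbar ybar c := by
  obtain ⟨hybar, κ, hκ, U, hU, hsub⟩ := hf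
  obtain ⟨r, hr, hrU⟩ := Metric.mem_nhds_iff.1 hU
  refine ⟨(4 * κ)⁻¹, by positivity, ?_⟩
  filter_upwards [ball_mem_nhds xbar (half_pos hr)] with x hx
  rcases eq_or_ne (f x) ⊤ with hfx | hfx
  · rw [hfx]; exact le_top
  have key : ∀ m : ℝ, 0 < m → f x ≤ f xbar + ((ybar (x - xbar) + m : ℝ) : EReal) →
      ‖x - xbar‖ ^ 2 ≤ 4 * κ * m := fun m hm =>
    sq_norm_sub_le_of_le_add hbot hlsc hconv hybar hκ.le (fun z hz => hsub z (hrU hz))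
      (mem_ball_iff_norm.1 hx) hm
  have hgap := hybar.2 x
  lift f x to ℝ using ⟨hfx, hbot x⟩ with a
  lift f xbar to ℝ using ⟨hybar.1, hbot xbar⟩ with b
  rw [← EReal.coe_add] at hgap ⊢
  rw [EReal.coe_le_coe_iff] at hgap ⊢
  have : (4 * κ)⁻¹ * ‖x - xbar‖ ^ 2 ≤ a - b - ybar (x - xbar) :=
    le_of_forall_gt_imp_ge_of_dense fun m hm => by
      rw [inv_mul_le_iff₀ (by positivity)]
      refine key m (by linarith) ?_
      rw [← EReal.coe_add, EReal.coe_le_coe_iff]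
      linarith
  linarith

end QuadraticGrowth

theorem stmt_5_general {X : Type*} [NormedAddCommGroup X] [NormedSpace ℝ X] [CompleteSpace X]
    (f g : X → EReal)
    (hfne_bot : ∀ x, f x ≠ ⊥)
    (hflsc : LowerSemicontinuous f)
    (hfconv : ∀ x y : X, ∀ a b : ℝ, 0 ≤ a → 0 ≤ b → a + b = 1 →
      f (a • x + b • y) ≤ (a : EReal) * f x + (b : EReal) * f y)
    (hgne_bot : ∀ x, g x ≠ ⊥)
    (hglsc : LowerSemicontinuous g)
    (hgconv : ∀ x y : X, ∀ a b : ℝ, 0 ≤ a → 0 ≤ b → a + b = 1 →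
      g (a • x + b • y) ≤ (a : EReal) * g x + (b : EReal) * g y)
    (xbar : X) (ybar wbar : X →L[ℝ] ℝ)
    (hf : StrongSubreg (subdiff f) xbar ybar)
    (hg : StrongSubreg (subdiff g) xbar wbar) :
    StrongSubreg (subdiff (fun x => f x + g x)) xbar (ybar + wbar) := by
  obtain ⟨c₁, hc₁, hf_growth⟩ := hf.exists_hasQuadraticGrowthAt hfne_bot hflsc hfconv
  obtain ⟨c₂, hc₂, hg_growth⟩ := hg.exists_hasQuadraticGrowthAt hgne_bot hglsc hgconv
  exact (hf_growth.add hg_growth).strongSubreg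
    (EReal.add_ne_bot_iff.2 ⟨hfne_bot xbar, hgne_bot xbar⟩) (add_mem_subdiff_add hf.1 hg.1)
    (add_pos hc₁ hc₂)

/-- Sum of strongly subregular subdifferentials. If `f, g ∈ Γ(X)` on a Banach
space, `ȳ* ∈ ∂f(x̄)`, `w̄* ∈ ∂g(x̄)`, and `∂f` (resp. `∂g`) is strongly metrically
subregular at `x̄` for `ȳ*` (resp. for `w̄*`), then `∂(f + g)` is strongly metrically
subregular at `x̄` for `ȳ* + w̄*`. -/
theorem stmt_5 {X : Type*} [NormedAddCommGroup X] [NormedSpace ℝ X] [CompleteSpace X]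
    (f g : X → EReal)
    (hfproper : ∃ x, f x ≠ ⊤) (hfne_bot : ∀ x, f x ≠ ⊥)
    (hflsc : LowerSemicontinuous f)
    (hfconv : ∀ x y : X, ∀ a b : ℝ, 0 ≤ a → 0 ≤ b → a + b = 1 →
      f (a • x + b • y) ≤ (a : EReal) * f x + (b : EReal) * f y)
    (hgproper : ∃ x, g x ≠ ⊤) (hgne_bot : ∀ x, g x ≠ ⊥)
    (hglsc : LowerSemicontinuous g)
    (hgconv : ∀ x y : X, ∀ a b : ℝ, 0 ≤ a → 0 ≤ b → a + b = 1 →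
      g (a • x + b • y) ≤ (a : EReal) * g x + (b : EReal) * g y)
    (xbar : X) (ybar wbar : X →L[ℝ] ℝ)
    (hybar : ybar ∈ subdiff f xbar) (hwbar : wbar ∈ subdiff g xbar)
    (hf : StrongSubreg (subdiff f) xbar ybar)
    (hg : StrongSubreg (subdiff g) xbar wbar) :
    StrongSubreg (subdiff (fun x => f x + g x)) xbar (ybar + wbar) :=
  stmt_5_general f g hfne_bot hflsc hfconv hgne_bot hglsc hgconv xbar ybar wbar hf hg
end

section
/- Let X be a real Banach space and f ∈ Γ(X). Assume there exist a neighborhood U of a point x̄ ∈ dom f and a constant c > 0 such that f((1 − λ)x + λx̄) ≤ (1 − λ)f(x) + λf(x̄) − c·λ(1 − λ)·‖x − x̄‖² for all x ∈ U and all λ ∈ (0, 1). Then for every y* ∈ ∂f(x̄) and every x ∈ U one has f(x) ≥ f(x̄) + ⟨y*, x − x̄⟩ + c·‖x − x̄‖². In particular, ∂f is strongly metrically subregular at x̄ for every y* ∈ ∂f(x̄). -/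
open Topology Filter Metric Set

/-!
Let `y* ∈ ∂f(x̄)` and `x ∈ U`. The subgradient inequality at `x_λ = (1 - λ)x + λx̄` together with
the strong convexity estimate at `x_λ` gives, after division by `1 - λ`,
`f(x̄) + ⟨y*, x - x̄⟩ + cλ‖x - x̄‖² ≤ f(x)`; letting `λ → 1` yields the quadratic growth.
If moreover `z* ∈ ∂f(x)`, adding the subgradient inequality of `z*` at `x̄` to the growth
inequality gives `c‖x - x̄‖² ≤ ⟨z* - y*, x - x̄⟩ ≤ ‖z* - y*‖‖x - x̄‖`, i.e. strong metric
subregularity with constant `1/c`.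
-/

lemma add_le_of_forall_add_mul_le {a t b : ℝ}
    (h : ∀ lam : ℝ, 0 < lam → lam < 1 → a + lam * t ≤ b) : a + t ≤ b := by
  have hlim : Tendsto (fun lam : ℝ => a + lam * t) (𝓝[<] 1) (𝓝 (a + 1 * t)) :=
    ((continuous_const.add (continuous_id.mul continuous_const)).tendsto 1).mono_left
      nhdsWithin_le_nhds
  have hev : ∀ᶠ lam in 𝓝[<] (1 : ℝ), a + lam * t ≤ b := by
    filter_upwards [Ioo_mem_nhdsLT one_pos] with lam hlam using h lam hlam.1 hlam.2
  simpa using le_of_tendsto hlim hev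

lemma norm_le_inv_mul_opNorm_of_mul_sq_le {X : Type*} [NormedAddCommGroup X] [NormedSpace ℝ X]
    {φ : X →L[ℝ] ℝ} {v : X} {c : ℝ} (hc : 0 < c) (h : c * ‖v‖ ^ 2 ≤ φ v) :
    ‖v‖ ≤ c⁻¹ * ‖φ‖ := by
  have hφ : φ v ≤ ‖φ‖ * ‖v‖ := (le_abs_self _).trans (φ.le_opNorm v)
  rcases (norm_nonneg v).eq_or_lt with hv | hv
  · rw [← hv]
    positivity
  · rw [le_inv_mul_iff₀ hc]
    nlinarith

section Subdifferential

variable {X : Type*} [NormedAddCommGroup X] [NormedSpace ℝ X] {f : X → EReal}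

lemma exists_coe_eq_of_mem_subdiff {x : X} {p : X →L[ℝ] ℝ} (hp : p ∈ subdiff f x)
    (hbot : f x ≠ ⊥) : ∃ A : ℝ, f x = A :=
  ⟨(f x).toReal, (EReal.coe_toReal hp.1 hbot).symm⟩

lemma ne_bot_of_mem_subdiff {x : X} {p : X →L[ℝ] ℝ} (hp : p ∈ subdiff f x) (hbot : f x ≠ ⊥)
    (z : X) : f z ≠ ⊥ := by
  obtain ⟨A, hA⟩ := exists_coe_eq_of_mem_subdiff hp hbot
  have hz := hp.2 z
  rw [hA, ← EReal.coe_add] at hz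
  exact ne_bot_of_le_ne_bot (EReal.coe_ne_bot _) hz

lemma add_apply_add_mul_sq_le_of_mem_subdiff {xbar x : X} {y : X →L[ℝ] ℝ}
    (hy : y ∈ subdiff f xbar) (hbot : f xbar ≠ ⊥) {c : ℝ}
    (hstrong : ∀ lam : ℝ, 0 < lam → lam < 1 →
      f ((1 - lam) • x + lam • xbar) ≤
        ((1 - lam : ℝ) : EReal) * f x + (lam : EReal) * f xbar
          - ((c * lam * (1 - lam) * ‖x - xbar‖ ^ 2 : ℝ) : EReal)) :
    f xbar + ((y (x - xbar) + c * ‖x - xbar‖ ^ 2 : ℝ) : EReal) ≤ f x := by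
  obtain ⟨A, hA⟩ := exists_coe_eq_of_mem_subdiff hy hbot
  rcases eq_or_ne (f x) ⊤ with htop | htop
  · exact htop ▸ le_top
  obtain ⟨B, hB⟩ : ∃ B : ℝ, f x = B :=
    ⟨(f x).toReal, (EReal.coe_toReal htop (ne_bot_of_mem_subdiff hy hbot x)).symm⟩
  rw [hA, hB, ← EReal.coe_add, EReal.coe_le_coe_iff, ← add_assoc]
  refine add_le_of_forall_add_mul_le fun lam h0 h1 => ?_
  have hseg : ((1 - lam) • x + lam • xbar) - xbar = (1 - lam) • (x - xbar) := by module
  have hcomb := (hy.2 _).trans (hstrong lam h0 h1)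
  rw [hseg, map_smul, smul_eq_mul, hA, hB] at hcomb
  have hreal : A + (1 - lam) * y (x - xbar) ≤
      (1 - lam) * B + lam * A - c * lam * (1 - lam) * ‖x - xbar‖ ^ 2 := by
    exact_mod_cast hcomb
  have h1' : 0 < 1 - lam := sub_pos.mpr h1
  refine le_of_mul_le_mul_left ?_ h1'
  linear_combination hreal

lemma mul_sq_le_sub_apply_of_mem_subdiff {xbar x : X} {y z : X →L[ℝ] ℝ} {c : ℝ}
    (hbot : f x ≠ ⊥)
    (hgrowth : f xbar + ((y (x - xbar) + c * ‖x - xbar‖ ^ 2 : ℝ) : EReal) ≤ f x)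
    (hz : z ∈ subdiff f x) : c * ‖x - xbar‖ ^ 2 ≤ (z - y) (x - xbar) := by
  obtain ⟨B, hB⟩ := exists_coe_eq_of_mem_subdiff hz hbot
  have hback := hz.2 xbar
  rw [hB] at hgrowth hback
  obtain ⟨A, hA⟩ : ∃ A : ℝ, f xbar = A := by
    refine ⟨(f xbar).toReal, (EReal.coe_toReal ?_ ?_).symm⟩
    · rintro htop
      rw [htop, EReal.top_add_coe, top_le_iff] at hgrowth
      exact EReal.coe_ne_top B hgrowth
    · rw [← EReal.coe_add] at hback
      exact ne_bot_of_le_ne_bot (EReal.coe_ne_bot _) hback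
  rw [hA, ← EReal.coe_add, EReal.coe_le_coe_iff] at hgrowth hback
  have hneg : z (xbar - x) = -z (x - xbar) := by rw [← map_neg, neg_sub]
  rw [sub_apply]
  linarith

end Subdifferential

theorem stmt_11_general {X : Type*} [NormedAddCommGroup X] [NormedSpace ℝ X]
    (f : X → EReal)
    (hne_bot : ∀ x, f x ≠ ⊥)
    (xbar : X)
    (U : Set X) (hU : U ∈ 𝓝 xbar) (c : ℝ) (hc : 0 < c)
    (hstrong : ∀ x ∈ U, ∀ lam : ℝ, 0 < lam → lam < 1 →
      f ((1 - lam) • x + lam • xbar) ≤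
        ((1 - lam : ℝ) : EReal) * f x + (lam : EReal) * f xbar
          - ((c * lam * (1 - lam) * ‖x - xbar‖ ^ 2 : ℝ) : EReal)) :
    (∀ y ∈ subdiff f xbar, ∀ x ∈ U,
        f xbar + ((y (x - xbar) + c * ‖x - xbar‖ ^ 2 : ℝ) : EReal) ≤ f x) ∧
    (∀ y ∈ subdiff f xbar, ∃ κ > (0 : ℝ), ∃ U' ∈ 𝓝 xbar, ∀ x ∈ U', ∀ z ∈ subdiff f x,
        ‖x - xbar‖ ≤ κ * ‖z - y‖) := by
  have hgrowth : ∀ y ∈ subdiff f xbar, ∀ x ∈ U,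
      f xbar + ((y (x - xbar) + c * ‖x - xbar‖ ^ 2 : ℝ) : EReal) ≤ f x := fun y hy x hx =>
    add_apply_add_mul_sq_le_of_mem_subdiff hy (hne_bot xbar) (hstrong x hx)
  refine ⟨hgrowth, fun y hy => ⟨c⁻¹, inv_pos.mpr hc, U, hU, fun x hx z hz => ?_⟩⟩
  exact norm_le_inv_mul_opNorm_of_mul_sq_le hc
    (mul_sq_le_sub_apply_of_mem_subdiff (hne_bot x) (hgrowth y hy x hx) hz)

/-- Let `f ∈ Γ(X)` on a Banach space, `x̄ ∈ dom f`, and suppose there are a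
neighborhood `U` of `x̄` and `c > 0` with
`f((1-λ)x + λx̄) ≤ (1-λ)f(x) + λf(x̄) - c·λ(1-λ)·‖x - x̄‖²` for all `x ∈ U`, `λ ∈ (0,1)`.
Then for every `y* ∈ ∂f(x̄)` and every `x ∈ U`,
`f(x) ≥ f(x̄) + ⟨y*, x - x̄⟩ + c·‖x - x̄‖²`; in particular `∂f` is strongly metrically
subregular at `x̄` for every `y* ∈ ∂f(x̄)` (i.e. for some `κ > 0` and neighborhood `U'`,
`‖x - x̄‖ ≤ κ·d(y*, ∂f(x))` on `U'`, stated pointwise over `z ∈ ∂f(x)`). -/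
theorem stmt_11 {X : Type*} [NormedAddCommGroup X] [NormedSpace ℝ X] [CompleteSpace X]
    (f : X → EReal)
    (hproper : ∃ x, f x ≠ ⊤) (hne_bot : ∀ x, f x ≠ ⊥)
    (hlsc : LowerSemicontinuous f)
    (hconv : ∀ x y : X, ∀ a b : ℝ, 0 ≤ a → 0 ≤ b → a + b = 1 →
      f (a • x + b • y) ≤ (a : EReal) * f x + (b : EReal) * f y)
    (xbar : X) (hdom : f xbar ≠ ⊤)
    (U : Set X) (hU : U ∈ 𝓝 xbar) (c : ℝ) (hc : 0 < c)
    (hstrong : ∀ x ∈ U, ∀ lam : ℝ, 0 < lam → lam < 1 →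
      f ((1 - lam) • x + lam • xbar) ≤
        ((1 - lam : ℝ) : EReal) * f x + (lam : EReal) * f xbar
          - ((c * lam * (1 - lam) * ‖x - xbar‖ ^ 2 : ℝ) : EReal)) :
    (∀ y ∈ subdiff f xbar, ∀ x ∈ U,
        f xbar + ((y (x - xbar) + c * ‖x - xbar‖ ^ 2 : ℝ) : EReal) ≤ f x) ∧
    (∀ y ∈ subdiff f xbar, ∃ κ > (0 : ℝ), ∃ U' ∈ 𝓝 xbar, ∀ x ∈ U', ∀ z ∈ subdiff f x,
        ‖x - xbar‖ ≤ κ * ‖z - y‖) :=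
  stmt_11_general f hne_bot xbar U hU c hc hstrong
end
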